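/- arXiv:1912.13402 — 3 statements merged into one kernel-verified Lean document; each statement's English description precedes it below -/
import Mathlib

section
/- Let x(t), ξ(t) solve x' = (|x|/|ξ|)·ξ, ξ' = −(|ξ|/|x|)·x with x(t), ξ(t) ≠ 0, and let c = ⟨x(0),ξ(0)⟩/(|x(0)|·|ξ(0)|). Then the unit vectors ω(t) = x(t)/|x(t)| and θ(t) = ξ(t)/|ξ(t)| satisfy the linear system ω' = −c·ω + θ and θ' = −ω + c·θ. -/
open scoped RealInnerProductSpace

/-!
Along the flow both `⟪x, ξ⟫` and the Hamiltonian `‖x‖ ‖ξ‖` are conserved, so the cosine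
`c(t) = ⟪x, ξ⟫ / (‖x‖ ‖ξ‖)` equals `c`. The derivative of a normalised curve `f / ‖f‖` is
`‖f‖⁻¹` times the component of `f'` orthogonal to `f`; for `x' = (‖x‖ / ‖ξ‖) ξ` this component
is `‖x‖ (θ - c ω)`, whence `ω' = -c ω + θ`, and symmetrically `θ' = -ω + c θ`.
-/

/-- Valid also at `b = 0`, since `a / 0 = 0`; hence the conservation laws below hold without
assuming `x, ξ ≠ 0`. -/
theorem div_mul_sq_self {K : Type*} [Field K] (a b : K) : a / b * b ^ 2 = a * b := by
  rcases eq_or_ne b 0 with rfl | hb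
  · simp
  · field_simp

section

variable {E : Type*} [NormedAddCommGroup E] [InnerProductSpace ℝ E] {f : ℝ → E} {f' : E} {t : ℝ}

theorem HasDerivAt.norm (hf : HasDerivAt f f' t) (h0 : f t ≠ 0) :
    HasDerivAt (fun s => ‖f s‖) (⟪f t, f'⟫ / ‖f t‖) t := by
  have h := hf.norm_sq.sqrt (by positivity)
  simp only [Real.sqrt_sq (norm_nonneg _)] at h
  convert h using 1
  field_simp

theorem HasDerivAt.inv_norm_smul (hf : HasDerivAt f f' t) (h0 : f t ≠ 0) :
    HasDerivAt (fun s => ‖f s‖⁻¹ • f s) (‖f t‖⁻¹ • (f' - (⟪f t, f'⟫ / ‖f t‖ ^ 2) • f t)) t := by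
  have h := ((hf.norm h0).inv (norm_ne_zero_iff.2 h0)).smul hf
  refine h.congr_deriv ?_
  have : ‖f t‖ ≠ 0 := norm_ne_zero_iff.2 h0
  simp only [Pi.inv_apply]
  match_scalars <;> field_simp

end

/-- Integral curves of the Hamiltonian vector field of `p(x, ξ) = ‖x‖ ‖ξ‖`. -/
structure IsNormMulNormFlow {E : Type*} [NormedAddCommGroup E] [InnerProductSpace ℝ E]
    (x ξ : ℝ → E) : Prop where
  hasDerivAt_fst : ∀ t, HasDerivAt x ((‖x t‖ / ‖ξ t‖) • ξ t) t
  hasDerivAt_snd : ∀ t, HasDerivAt ξ (-((‖ξ t‖ / ‖x t‖) • x t)) t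

namespace IsNormMulNormFlow

variable {E : Type*} [NormedAddCommGroup E] [InnerProductSpace ℝ E] {x ξ : ℝ → E}

theorem inner_eq (h : IsNormMulNormFlow x ξ) (s t : ℝ) : ⟪x s, ξ s⟫ = ⟪x t, ξ t⟫ := by
  have hderiv : ∀ τ, HasDerivAt (fun s => ⟪x s, ξ s⟫) 0 τ := fun τ => by
    refine ((h.hasDerivAt_fst τ).inner ℝ (h.hasDerivAt_snd τ)).congr_deriv ?_
    rw [inner_neg_right, real_inner_smul_left, real_inner_smul_right,
      real_inner_self_eq_norm_sq, real_inner_self_eq_norm_sq, div_mul_sq_self, div_mul_sq_self]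
    ring
  exact is_const_of_deriv_eq_zero (fun τ => (hderiv τ).differentiableAt)
    (fun τ => (hderiv τ).deriv) s t

theorem norm_mul_norm_eq (h : IsNormMulNormFlow x ξ) (s t : ℝ) :
    ‖x s‖ * ‖ξ s‖ = ‖x t‖ * ‖ξ t‖ := by
  have hderiv : ∀ τ, HasDerivAt (fun s => ‖x s‖ ^ 2 * ‖ξ s‖ ^ 2) 0 τ := fun τ => by
    refine ((h.hasDerivAt_fst τ).norm_sq.mul (h.hasDerivAt_snd τ).norm_sq).congr_deriv ?_
    rw [inner_neg_right, real_inner_smul_right, real_inner_smul_right, real_inner_comm (x τ)]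
    linear_combination
      (2 * ⟪x τ, ξ τ⟫) * (div_mul_sq_self ‖x τ‖ ‖ξ τ‖ - div_mul_sq_self ‖ξ τ‖ ‖x τ‖)
  have hsq := is_const_of_deriv_eq_zero (fun τ => (hderiv τ).differentiableAt)
    (fun τ => (hderiv τ).deriv) s t
  simp only [← mul_pow] at hsq
  exact (pow_left_inj₀ (by positivity) (by positivity) two_ne_zero).1 hsq

theorem hasDerivAt_inv_norm_smul_fst (h : IsNormMulNormFlow x ξ) {t : ℝ} (h0 : x t ≠ 0) :
    HasDerivAt (fun s => ‖x s‖⁻¹ • x s)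
      (-(⟪x t, ξ t⟫ / (‖x t‖ * ‖ξ t‖)) • (‖x t‖⁻¹ • x t) + ‖ξ t‖⁻¹ • ξ t) t := by
  refine ((h.hasDerivAt_fst t).inv_norm_smul h0).congr_deriv ?_
  have : ‖x t‖ ≠ 0 := norm_ne_zero_iff.2 h0
  rw [real_inner_smul_right]
  match_scalars <;> field_simp

theorem hasDerivAt_inv_norm_smul_snd (h : IsNormMulNormFlow x ξ) {t : ℝ} (h0 : ξ t ≠ 0) :
    HasDerivAt (fun s => ‖ξ s‖⁻¹ • ξ s)
      (-(‖x t‖⁻¹ • x t) + (⟪x t, ξ t⟫ / (‖x t‖ * ‖ξ t‖)) • (‖ξ t‖⁻¹ • ξ t)) t := by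
  refine ((h.hasDerivAt_snd t).inv_norm_smul h0).congr_deriv ?_
  have : ‖ξ t‖ ≠ 0 := norm_ne_zero_iff.2 h0
  rw [inner_neg_right, real_inner_smul_right, real_inner_comm]
  match_scalars <;> field_simp

end IsNormMulNormFlow

/-- Along the Hamiltonian flow of `p(x,ξ)=|x||ξ|`, the unit vectors `ω = x/|x|`, `θ = ξ/|ξ|`
solve the linear system `ω' = -cω + θ`, `θ' = -ω + cθ` with
`c = ⟨x(0),ξ(0)⟩/(|x(0)||ξ(0)|)`. -/
theorem stmt2 (d : ℕ) (x ξ : ℝ → EuclideanSpace ℝ (Fin d))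
    (hx0 : ∀ t, x t ≠ 0) (hξ0 : ∀ t, ξ t ≠ 0)
    (hx : ∀ t, HasDerivAt x ((‖x t‖ / ‖ξ t‖) • ξ t) t)
    (hξ : ∀ t, HasDerivAt ξ (-((‖ξ t‖ / ‖x t‖) • x t)) t)
    (c : ℝ) (hc : c = ⟪x 0, ξ 0⟫ / (‖x 0‖ * ‖ξ 0‖))
    (ω θ : ℝ → EuclideanSpace ℝ (Fin d))
    (hω : ω = fun t => ‖x t‖⁻¹ • x t) (hθ : θ = fun t => ‖ξ t‖⁻¹ • ξ t) :
    (∀ t, HasDerivAt ω (-c • ω t + θ t) t) ∧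
    (∀ t, HasDerivAt θ (-ω t + c • θ t) t) := by
  have flow : IsNormMulNormFlow x ξ := ⟨hx, hξ⟩
  have hcos : ∀ t, ⟪x t, ξ t⟫ / (‖x t‖ * ‖ξ t‖) = c := fun t => by
    rw [hc, flow.inner_eq t 0, flow.norm_mul_norm_eq t 0]
  subst hω hθ
  refine ⟨fun t => ?_, fun t => ?_⟩
  · simpa only [hcos, neg_smul] using flow.hasDerivAt_inv_norm_smul_fst (hx0 t)
  · simpa only [hcos] using flow.hasDerivAt_inv_norm_smul_snd (hξ0 t)
end

section
/- Let ω₀, θ₀ ∈ S^{d−1} with ⟨ω₀,θ₀⟩² ≠ 1 and set c = ⟨ω₀,θ₀⟩. Then the solution (ω(t), θ(t)) of ω' = −cω + θ, θ' = −ω + cθ with initial data (ω₀, θ₀) satisfies (ω(T), θ(T)) = (ω₀, θ₀) for T = 2π/√(1−c²), and no smaller T > 0 has this property. -/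
/-!
Differentiating once more, both `ω` and `θ` solve the harmonic oscillator `x'' = -(1 - c²) x`,
so with `s = √(1 - c²)` they are `cos (s t)`-`sin (s t)` combinations of their initial data and
`T = 2π/s` is a period. Pairing the formula for `ω t` with `ω₀` gives
`⟪ω₀, ω t⟫ = cos (s t)`, so `ω T = ω₀` forces `cos (s T) = 1`, i.e. `s T ∈ 2πℤ`.
-/

open scoped RealInnerProductSpace

open Real

section HarmonicOscillator

variable {E : Type*} [NormedAddCommGroup E] [NormedSpace ℝ E]

theorem harmonic_oscillator_eq {s : ℝ} (hs : s ≠ 0) {x v : ℝ → E}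
    (hx : ∀ t, HasDerivAt x (v t) t) (hv : ∀ t, HasDerivAt v (-(s ^ 2) • x t) t) (t : ℝ) :
    x t = cos (s * t) • x 0 + (sin (s * t) / s) • v 0 := by
  have hst (u : ℝ) : HasDerivAt (fun u => s * u) s u := by
    simpa using (hasDerivAt_id u).const_mul s
  -- `cos (s t) x - sin (s t) v / s` and `s sin (s t) x + cos (s t) v` are first integrals.
  set g : ℝ → E := fun u => cos (s * u) • x u - (sin (s * u) / s) • v u
  set h : ℝ → E := fun u => (s * sin (s * u)) • x u + cos (s * u) • v u
  have hg (u : ℝ) : HasDerivAt g 0 u := by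
    refine ((((hst u).cos).smul (hx u)).sub
      ((((hst u).sin).div_const s).smul (hv u))).congr_deriv ?_
    match_scalars <;> field_simp <;> ring
  have hh (u : ℝ) : HasDerivAt h 0 u := by
    refine ((((hst u).sin).const_mul s).smul (hx u)).add
      (((hst u).cos).smul (hv u)) |>.congr_deriv ?_
    match_scalars <;> ring
  have hgt : g t = x 0 := by
    simpa [g] using is_const_of_deriv_eq_zero (fun u => (hg u).differentiableAt)
      (fun u => (hg u).deriv) t 0
  have hht : h t = v 0 := by
    simpa [h] using is_const_of_deriv_eq_zero (fun u => (hh u).differentiableAt)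
      (fun u => (hh u).deriv) t 0
  rw [← hgt, ← hht]
  simp only [g, h]
  match_scalars
  · field_simp
    linear_combination -sin_sq_add_cos_sq (s * t)
  · ring

end HarmonicOscillator

section CornerFlow

variable {E : Type*} [NormedAddCommGroup E] [NormedSpace ℝ E] {c s : ℝ} {ω θ : ℝ → E}

theorem corner_flow_fst_eq (hs : s ≠ 0) (hsc : s ^ 2 = 1 - c ^ 2)
    (hω : ∀ t, HasDerivAt ω (-c • ω t + θ t) t) (hθ : ∀ t, HasDerivAt θ (-ω t + c • θ t) t)
    (t : ℝ) : ω t = cos (s * t) • ω 0 + (sin (s * t) / s) • (-c • ω 0 + θ 0) := by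
  refine harmonic_oscillator_eq hs hω (fun u => ?_) t
  refine ((hω u).const_smul (-c)).add (hθ u) |>.congr_deriv ?_
  match_scalars
  · linear_combination hsc
  · ring

theorem corner_flow_snd_eq (hs : s ≠ 0) (hsc : s ^ 2 = 1 - c ^ 2)
    (hω : ∀ t, HasDerivAt ω (-c • ω t + θ t) t) (hθ : ∀ t, HasDerivAt θ (-ω t + c • θ t) t)
    (t : ℝ) : θ t = cos (s * t) • θ 0 + (sin (s * t) / s) • (-ω 0 + c • θ 0) := by
  refine harmonic_oscillator_eq hs hθ (fun u => ?_) t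
  refine (hω u).neg.add ((hθ u).const_smul c) |>.congr_deriv ?_
  match_scalars
  · ring
  · linear_combination hsc

end CornerFlow

theorem inner_sq_lt_one_of_norm_eq_one {F : Type*} [NormedAddCommGroup F] [InnerProductSpace ℝ F]
    {x y : F} (hx : ‖x‖ = 1) (hy : ‖y‖ = 1) (hxy : ⟪x, y⟫ ^ 2 ≠ 1) : ⟪x, y⟫ ^ 2 < 1 := by
  have h := abs_real_inner_le_norm x y
  rw [hx, hy, one_mul] at h
  refine lt_of_le_of_ne ?_ hxy
  nlinarith [sq_abs ⟪x, y⟫, abs_nonneg ⟪x, y⟫]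

theorem two_pi_le_of_cos_eq_one {x : ℝ} (hx : 0 < x) (h : cos x = 1) : 2 * π ≤ x := by
  by_contra! hlt
  exact hx.ne' ((cos_eq_one_iff_of_lt_of_lt (by linarith [pi_pos]) hlt).mp h)

/-- For `ω₀, θ₀` on the unit sphere with `⟨ω₀,θ₀⟩² ≠ 1` and `c = ⟨ω₀,θ₀⟩`, the solution of
`ω' = -cω + θ`, `θ' = -ω + cθ` with data `(ω₀,θ₀)` returns to `(ω₀,θ₀)` exactly at time
`T = 2π/√(1-c²)`, and at no smaller positive time. -/
theorem stmt5 (d : ℕ) (ω₀ θ₀ : EuclideanSpace ℝ (Fin d))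
    (hω₀ : ‖ω₀‖ = 1) (hθ₀ : ‖θ₀‖ = 1) (hangle : ⟪ω₀, θ₀⟫ ^ 2 ≠ 1)
    (c : ℝ) (hc : c = ⟪ω₀, θ₀⟫)
    (ω θ : ℝ → EuclideanSpace ℝ (Fin d))
    (hω : ∀ t, HasDerivAt ω (-c • ω t + θ t) t)
    (hθ : ∀ t, HasDerivAt θ (-ω t + c • θ t) t)
    (hω0 : ω 0 = ω₀) (hθ0 : θ 0 = θ₀) :
    (ω (2 * Real.pi / Real.sqrt (1 - c ^ 2)) = ω₀ ∧
     θ (2 * Real.pi / Real.sqrt (1 - c ^ 2)) = θ₀) ∧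
    (∀ T : ℝ, 0 < T → ω T = ω₀ → θ T = θ₀ →
      2 * Real.pi / Real.sqrt (1 - c ^ 2) ≤ T) := by
  have hc2 : c ^ 2 < 1 := hc ▸ inner_sq_lt_one_of_norm_eq_one hω₀ hθ₀ hangle
  set s := √(1 - c ^ 2)
  have hs : 0 < s := sqrt_pos.mpr (by linarith)
  have hsc : s ^ 2 = 1 - c ^ 2 := sq_sqrt (by linarith)
  have hωt := corner_flow_fst_eq hs.ne' hsc hω hθ
  have hθt := corner_flow_snd_eq hs.ne' hsc hω hθ
  rw [hω0, hθ0] at hωt hθt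
  have hperiod : s * (2 * π / s) = 2 * π := by field_simp
  refine ⟨⟨by simp [hωt, hperiod], by simp [hθt, hperiod]⟩, fun T hT hωT _ => ?_⟩
  have hcos : cos (s * T) = 1 := by
    have h := congrArg (⟪ω₀, ·⟫) (hωt T)
    simp only [hωT, inner_add_right, real_inner_smul_right, real_inner_self_eq_norm_sq, hω₀,
      ← hc] at h
    linarith
  rw [div_le_iff₀ hs, mul_comm T]
  exact two_pi_le_of_cos_eq_one (mul_pos hs hT) hcos
end

section
/- For every integer d ≥ 1, lim_{τ→∞} [ ∫_{0}^{τ} (1+r²)^{−d/2} r^{d−1} dr − log τ ] = −(1/2)·(Ψ(d/2) + γ), where Ψ is the digamma function and γ is the Euler–Mascheroni constant. -/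
/-!
Write `I_d(τ) = ∫₀^τ (1 + r²)^(-d/2) r^(d-1) dr`. Since `r² = (1 + r²) - 1`,
`I_{d+2}(τ) = I_d(τ) - ∫₀^τ (1 + r²)^(-(d+2)/2) r^(d-1) dr`, and the last integrand has the
primitive `r^d (1 + r²)^(-d/2) / d`, which tends to `1/d`. Hence the limits `c_d` of
`I_d(τ) - log τ` satisfy `c_{d+2} = c_d - 1/d`, which is the recurrence `Ψ(x + 1) = Ψ(x) + 1/x`
at `x = d/2`. The base cases are explicit: `I_1(τ) = arsinh τ = log τ + log 2 + o(1)` and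
`I_2(τ) = log (1 + τ²) / 2 = log τ + o(1)`, against `Ψ(1/2) = -γ - 2 log 2` and `Ψ(1) = -γ`.
-/

open Filter

/-- The digamma function `Ψ(z) = d/dz log Γ(z)`. -/
noncomputable def digamma (z : ℝ) : ℝ := deriv (fun x => Real.log (Real.Gamma x)) z

open Real Topology

section Digamma

variable {x : ℝ}

lemma hasDerivAt_log_Gamma (hx : 0 < x) :
    HasDerivAt (fun y => log (Gamma y)) (digamma x) x :=
  ((differentiableAt_Gamma fun m hm => by linarith [m.cast_nonneg (α := ℝ)]).log
    (Gamma_pos_of_pos hx).ne').hasDerivAt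

lemma digamma_one : digamma 1 = -eulerMascheroniConstant := by
  simpa using (hasDerivAt_log_Gamma one_pos).unique (hasDerivAt_Gamma_one.log (by simp))

lemma digamma_one_half :
    digamma (1 / 2) = -(eulerMascheroniConstant + 2 * log 2) := by
  have h := (hasDerivAt_log_Gamma one_half_pos).unique
    (hasDerivAt_Gamma_one_half.log (Gamma_pos_of_pos one_half_pos).ne')
  rw [h, Gamma_one_half_eq]
  field_simp

lemma digamma_add_one (hx : 0 < x) : digamma (x + 1) = digamma x + x⁻¹ := by
  have hfe : (fun y => log (Gamma (y + 1))) =ᶠ[𝓝 x] fun y => log (Gamma y) + log y := by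
    filter_upwards [eventually_gt_nhds hx] with y hy
    rw [Gamma_add_one hy.ne', log_mul hy.ne' (Gamma_pos_of_pos hy).ne', add_comm]
  calc digamma (x + 1) = deriv (fun y => log (Gamma (y + 1))) x :=
        (deriv_comp_add_const (f := fun y => log (Gamma y)) 1 x).symm
    _ = digamma x + x⁻¹ :=
        hfe.deriv_eq.trans ((hasDerivAt_log_Gamma hx).add (hasDerivAt_log hx.ne')).deriv

end Digamma

lemma tendsto_one_add_inv_sq_atTop : Tendsto (fun τ : ℝ => 1 + τ⁻¹ ^ 2) atTop (𝓝 1) := by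
  simpa using (tendsto_inv_atTop_zero.pow 2).const_add (1 : ℝ)

lemma one_add_inv_sq_rpow {τ : ℝ} (hτ : 0 < τ) (y : ℝ) :
    (1 + τ⁻¹ ^ 2) ^ y = (1 + τ ^ 2) ^ y * (τ ^ 2) ^ (-y) := by
  rw [rpow_neg (by positivity), ← div_eq_mul_inv, ← div_rpow (by positivity) (by positivity)]
  congr 1
  field_simp
  ring

lemma tendsto_pow_mul_one_add_sq_rpow (k : ℕ) :
    Tendsto (fun τ : ℝ => τ ^ k * (1 + τ ^ 2) ^ (-(k : ℝ) / 2)) atTop (𝓝 1) := by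
  have h := tendsto_one_add_inv_sq_atTop.rpow_const (p := -(k : ℝ) / 2) (Or.inl one_ne_zero)
  rw [one_rpow] at h
  refine h.congr' ?_
  filter_upwards [eventually_gt_atTop 0] with τ hτ
  have hpow : (τ ^ 2) ^ (-(-(k : ℝ) / 2)) = τ ^ k := by
    rw [← rpow_natCast τ 2, ← rpow_mul hτ.le, ← rpow_natCast τ k]
    congr 1
    push_cast
    ring
  rw [one_add_inv_sq_rpow hτ, hpow, mul_comm]

lemma tendsto_arsinh_sub_log_atTop : Tendsto (fun τ => arsinh τ - log τ) atTop (𝓝 (log 2)) := by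
  have h := (tendsto_one_add_inv_sq_atTop.sqrt.const_add 1).log (by norm_num)
  rw [sqrt_one, one_add_one_eq_two] at h
  refine h.congr' ?_
  filter_upwards [eventually_gt_atTop 0] with τ hτ
  have hsqrt : √(1 + τ ^ 2) = τ * √(1 + τ⁻¹ ^ 2) := by
    rw [show 1 + τ ^ 2 = τ ^ 2 * (1 + τ⁻¹ ^ 2) by field_simp; ring, sqrt_mul (sq_nonneg τ),
      sqrt_sq hτ.le]
  rw [arsinh, hsqrt, show τ + τ * √(1 + τ⁻¹ ^ 2) = τ * (1 + √(1 + τ⁻¹ ^ 2)) by ring,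
    log_mul hτ.ne' (by positivity), add_sub_cancel_left]

lemma tendsto_log_one_add_sq_div_two_sub_log_atTop :
    Tendsto (fun τ => log (1 + τ ^ 2) / 2 - log τ) atTop (𝓝 0) := by
  have h := (tendsto_one_add_inv_sq_atTop.log one_ne_zero).div_const 2
  rw [log_one, zero_div] at h
  refine h.congr' ?_
  filter_upwards [eventually_gt_atTop 0] with τ hτ
  rw [show 1 + τ⁻¹ ^ 2 = (1 + τ ^ 2) / τ ^ 2 by field_simp; ring,
    log_div (by positivity) (by positivity), log_pow]
  push_cast
  ring

noncomputable def radialIntegrand (s : ℝ) (n : ℕ) (r : ℝ) : ℝ := (1 + r ^ 2) ^ (-s / 2) * r ^ n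

lemma continuous_radialIntegrand (s : ℝ) (n : ℕ) : Continuous (radialIntegrand s n) :=
  ((continuous_const.add (continuous_pow 2)).rpow_const
    fun r => Or.inl (by dsimp; positivity)).mul (continuous_pow n)

lemma radialIntegrand_add_two (s : ℝ) (n : ℕ) (r : ℝ) :
    radialIntegrand (s + 2) (n + 2) r = radialIntegrand s n r - radialIntegrand (s + 2) n r := by
  have hpos : 0 < 1 + r ^ 2 := by positivity
  simp only [radialIntegrand]
  rw [show -(s + 2) / 2 = -s / 2 - 1 by ring, rpow_sub hpos, rpow_one]
  field_simp
  ring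

lemma integral_radialIntegrand_one_zero (τ : ℝ) :
    ∫ r in (0 : ℝ)..τ, radialIntegrand 1 0 r = arsinh τ := by
  have hderiv (r : ℝ) : HasDerivAt arsinh (radialIntegrand 1 0 r) r := by
    convert hasDerivAt_arsinh r using 1
    rw [radialIntegrand.eq_def, pow_zero, mul_one, neg_div, rpow_neg (by positivity), sqrt_eq_rpow]
  rw [intervalIntegral.integral_eq_sub_of_hasDerivAt (fun r _ => hderiv r)
    ((continuous_radialIntegrand 1 0).intervalIntegrable 0 τ), arsinh_zero, sub_zero]

lemma integral_radialIntegrand_two_one (τ : ℝ) :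
    ∫ r in (0 : ℝ)..τ, radialIntegrand 2 1 r = log (1 + τ ^ 2) / 2 := by
  have hderiv (r : ℝ) : HasDerivAt (fun t => log (1 + t ^ 2) / 2) (radialIntegrand 2 1 r) r := by
    refine ((((hasDerivAt_pow 2 r).const_add 1).log (by positivity)).div_const 2).congr_deriv ?_
    rw [radialIntegrand.eq_def, show -(2 : ℝ) / 2 = -1 by norm_num, rpow_neg_one]
    field_simp
    ring
  rw [intervalIntegral.integral_eq_sub_of_hasDerivAt (fun r _ => hderiv r)
    ((continuous_radialIntegrand 2 1).intervalIntegrable 0 τ)]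
  simp

lemma hasDerivAt_pow_succ_mul_one_add_sq_rpow (n : ℕ) (r : ℝ) :
    HasDerivAt (fun t : ℝ => t ^ (n + 1) * (1 + t ^ 2) ^ (-((n : ℝ) + 1) / 2))
      (((n : ℝ) + 1) * radialIntegrand ((n : ℝ) + 1 + 2) n r) r := by
  have hpos : 0 < 1 + r ^ 2 := by positivity
  refine ((hasDerivAt_pow (n + 1) r).mul (((hasDerivAt_pow 2 r).const_add 1).rpow_const
    (p := -((n : ℝ) + 1) / 2) (Or.inl hpos.ne'))).congr_deriv ?_
  rw [radialIntegrand.eq_def, show -((n : ℝ) + 1 + 2) / 2 = -((n : ℝ) + 1) / 2 - 1 by ring,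
    rpow_sub hpos, rpow_one]
  push_cast
  field_simp
  ring

lemma integral_radialIntegrand_add_two_self (n : ℕ) (τ : ℝ) :
    ∫ r in (0 : ℝ)..τ, radialIntegrand ((n : ℝ) + 1 + 2) n r =
      τ ^ (n + 1) * (1 + τ ^ 2) ^ (-((n : ℝ) + 1) / 2) / ((n : ℝ) + 1) := by
  have hderiv (r : ℝ) : HasDerivAt
      (fun t : ℝ => t ^ (n + 1) * (1 + t ^ 2) ^ (-((n : ℝ) + 1) / 2) / ((n : ℝ) + 1))
      (radialIntegrand ((n : ℝ) + 1 + 2) n r) r := by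
    refine ((hasDerivAt_pow_succ_mul_one_add_sq_rpow n r).div_const ((n : ℝ) + 1)).congr_deriv ?_
    exact mul_div_cancel_left₀ _ (by positivity)
  rw [intervalIntegral.integral_eq_sub_of_hasDerivAt (fun r _ => hderiv r)
    ((continuous_radialIntegrand _ n).intervalIntegrable 0 τ)]
  simp

lemma tendsto_integral_radialIntegrand_add_two_sub_log (n : ℕ) {c : ℝ}
    (h : Tendsto (fun τ => (∫ r in (0 : ℝ)..τ, radialIntegrand ((n : ℝ) + 1) n r) - log τ)
      atTop (𝓝 c)) :
    Tendsto (fun τ => (∫ r in (0 : ℝ)..τ, radialIntegrand ((n : ℝ) + 1 + 2) (n + 2) r) - log τ)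
      atTop (𝓝 (c - ((n : ℝ) + 1)⁻¹)) := by
  have htail : Tendsto (fun τ => ∫ r in (0 : ℝ)..τ, radialIntegrand ((n : ℝ) + 1 + 2) n r)
      atTop (𝓝 ((n : ℝ) + 1)⁻¹) := by
    simp_rw [integral_radialIntegrand_add_two_self]
    simpa using (tendsto_pow_mul_one_add_sq_rpow (n + 1)).div_const ((n : ℝ) + 1)
  refine (h.sub htail).congr fun τ => ?_
  rw [intervalIntegral.integral_congr fun r _ => radialIntegrand_add_two _ n r,
    intervalIntegral.integral_sub ((continuous_radialIntegrand _ n).intervalIntegrable 0 τ)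
      ((continuous_radialIntegrand _ n).intervalIntegrable 0 τ)]
  ring

lemma tendsto_integral_radialIntegrand_sub_log (n : ℕ) :
    Tendsto (fun τ => (∫ r in (0 : ℝ)..τ, radialIntegrand ((n : ℝ) + 1) n r) - log τ) atTop
      (𝓝 (-(1 / 2) * (digamma (((n : ℝ) + 1) / 2) + eulerMascheroniConstant))) := by
  induction n using Nat.twoStepInduction with
  | zero =>
    have h := tendsto_arsinh_sub_log_atTop
    simp_rw [← integral_radialIntegrand_one_zero] at h
    convert h using 2
    · norm_num
    · rw [Nat.cast_zero, zero_add, digamma_one_half]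
      ring
  | one =>
    have h := tendsto_log_one_add_sq_div_two_sub_log_atTop
    simp_rw [← integral_radialIntegrand_two_one] at h
    convert h using 2
    · norm_num
    · rw [Nat.cast_one, one_add_one_eq_two, div_self two_ne_zero, digamma_one]
      ring
  | more n ih _ =>
    have hcast : ((n + 2 : ℕ) : ℝ) + 1 = (n : ℝ) + 1 + 2 := by push_cast; ring
    have hdigamma : digamma (((n : ℝ) + 1 + 2) / 2) =
        digamma (((n : ℝ) + 1) / 2) + 2 / ((n : ℝ) + 1) := by
      rw [show ((n : ℝ) + 1 + 2) / 2 = ((n : ℝ) + 1) / 2 + 1 by ring,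
        digamma_add_one (by positivity), inv_div]
    rw [hcast, hdigamma]
    convert tendsto_integral_radialIntegrand_add_two_sub_log n ih using 2
    field_simp
    ring

/-- `lim_{τ→∞} [ ∫₀^τ (1+r²)^{-d/2} r^{d-1} dr − log τ ] = −(1/2)(Ψ(d/2) + γ)`. -/
theorem stmt10 (d : ℕ) (hd : 1 ≤ d) :
    Tendsto (fun τ : ℝ =>
        (∫ r in (0:ℝ)..τ, (1 + r ^ 2) ^ (-(d : ℝ) / 2) * r ^ ((d : ℝ) - 1)) - Real.log τ)
      atTop
      (nhds (-(1 / 2) * (digamma ((d : ℝ) / 2) + Real.eulerMascheroniConstant))) := by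
  obtain ⟨n, rfl⟩ := Nat.exists_eq_add_of_le' hd
  have hintegrand (r : ℝ) : (1 + r ^ 2) ^ (-((n + 1 : ℕ) : ℝ) / 2) * r ^ (((n + 1 : ℕ) : ℝ) - 1) =
      radialIntegrand ((n : ℝ) + 1) n r := by
    rw [radialIntegrand, Nat.cast_succ, add_sub_cancel_right, rpow_natCast]
  simp_rw [hintegrand, Nat.cast_succ]
  exact tendsto_integral_radialIntegrand_sub_log n
end
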